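/- Let p be prime, H ≤ F_p^* a multiplicative subgroup with |H| < p^{1/2}, N an interval of N consecutive integers, and a coprime to p. Assume J(N,H) ≤ p^{o(1)}(|H|^2 + N|H| + N^2|H|^2/p + N|H|^{7/4}/p^{1/4}) and T_3(H) ≪ |H|^4 log|H|. Then ∑_{n∈N} |∑_{x∈H} e_p(anx)| ≤ N|H| · Δ2^{1/6} · p^{o(1)}, where Δ2 = (p / (N |H|^3)) · Γ(N,H) and Γ(N,H) = 1 + |H|/N + N|H|/p + |H|^{3/4}/p^{1/4}. -/

import Mathlib

open scoped Classical

/-- `ep p z = exp(2πi z/p)`, where `z ∈ F_p` is lifted to `{0,...,p-1}`. -/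
noncomputable def ep (p : ℕ) (z : ZMod p) : ℂ :=
  Complex.exp (2 * Real.pi * Complex.I * z.val / p)

/-- number of `2m`-tuples in `H^{2m}` with `h₁+⋯+h_m ≡ h_{m+1}+⋯+h_{2m} (mod p)`. -/
noncomputable def T (p m : ℕ) (H : Subgroup (ZMod p)ˣ) : ℕ :=
  Nat.card {t : (Fin m → H) × (Fin m → H) //
    (∑ i, ((t.1 i : (ZMod p)ˣ) : ZMod p)) = ∑ i, ((t.2 i : (ZMod p)ˣ) : ZMod p)}

/-- number of quadruples `(n₁,n₂,h₁,h₂) ∈ 𝒩² × H²` with `n₁h₁ ≡ n₂h₂ (mod p)`,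
where `𝒩 = {L+1,...,L+N}`. -/
noncomputable def J (p : ℕ) (L : ℤ) (N : ℕ) (H : Subgroup (ZMod p)ˣ) : ℕ :=
  Nat.card {q : (ℤ × ℤ) × H × H //
    q.1.1 ∈ Finset.Icc (L + 1) (L + N) ∧ q.1.2 ∈ Finset.Icc (L + 1) (L + N) ∧
      (q.1.1 : ZMod p) * ((q.2.1 : (ZMod p)ˣ) : ZMod p)
        = (q.1.2 : ZMod p) * ((q.2.2 : (ZMod p)ˣ) : ZMod p)}

/-!
Write `S(λ) = ∑_{x ∈ H} e_p(λx)`. Since `S` is constant on the cosets `λH`,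
`|H| ∑_n |S(an)|² = ∑_λ r(λ) |S(λ)|²`, where `r(λ)` counts the `(n, x) ∈ 𝒩 × H` with `anx = λ`.
Hölder with exponents `3/2, 3` and Cauchy–Schwarz bound the cube of this by
`(∑ r) (∑ r²) (∑ |S|⁶) = N|H| · J(𝒩, H) · p T₃(H)`, so that `|H|² (∑_n |S(an)|)⁶ ≤ N⁴ p J T₃`.
Inserting the two hypotheses, together with `log |H| ≤ log p ≪_ε p^{5ε}`, gives the bound.
-/

open Finset

lemma AddChar.map_sum_eq_prod {A M ι : Type*} [AddCommMonoid A] [CommMonoid M]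
    (ψ : AddChar A M) (s : Finset ι) (f : ι → A) : ψ (∑ i ∈ s, f i) = ∏ i ∈ s, ψ (f i) := by
  induction s using Finset.cons_induction with
  | empty => simp
  | cons i s hi ih => rw [sum_cons, prod_cons, AddChar.map_add_eq_mul, ih]

lemma ep_eq_stdAddChar {p : ℕ} [NeZero p] (z : ZMod p) : ep p z = ZMod.stdAddChar z := by
  rw [ZMod.stdAddChar_apply, ZMod.toCircle_apply, ep]

theorem sum_norm_sum_stdAddChar_mul_sq {N : ℕ} [NeZero N] {ι : Type*} [Fintype ι]
    (f : ι → ZMod N) :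
    ∑ t : ZMod N, ‖∑ i, ZMod.stdAddChar (t * f i)‖ ^ 2
      = N * Fintype.card {x : ι × ι // f x.1 = f x.2} := by
  have hψ := ZMod.isPrimitive_stdAddChar N
  have hC : ∑ t : ZMod N, ((‖∑ i, ZMod.stdAddChar (t * f i)‖ ^ 2 : ℝ) : ℂ)
      = N * Fintype.card {x : ι × ι // f x.1 = f x.2} := by
    push_cast
    simp_rw [← Complex.mul_conj', map_sum, ← AddChar.map_neg_eq_conj,
      sum_mul_sum, ← AddChar.map_add_eq_mul, ← Fintype.sum_prod_type']
    rw [Fintype.sum_prod_type_right]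
    simp_rw [show ∀ t : ZMod N, ∀ x : ι × ι, t * f x.1 + -(t * f x.2) = t * (f x.1 - f x.2)
      from fun t x => by ring, AddChar.sum_mulShift _ hψ, sub_eq_zero]
    rw [Fintype.card_subtype, ← sum_boole, mul_sum]
    simp [ZMod.card]
  exact_mod_cast hC

section expSum

variable {p : ℕ} [NeZero p] (H : Subgroup (ZMod p)ˣ)

noncomputable def expSum (t : ZMod p) : ℂ :=
  ∑ x : H, ZMod.stdAddChar (t * ((x : (ZMod p)ˣ) : ZMod p))

lemma expSum_mul_coe (t : ZMod p) (h : H) :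
    expSum H (t * ((h : (ZMod p)ˣ) : ZMod p)) = expSum H t :=
  Fintype.sum_equiv (Equiv.mulLeft h) _ _ fun x => by simp [mul_assoc]

lemma expSum_pow (t : ZMod p) (m : ℕ) :
    expSum H t ^ m = ∑ x : Fin m → H, ZMod.stdAddChar (t * ∑ i, ((x i : (ZMod p)ˣ) : ZMod p)) := by
  simp_rw [expSum, ← Fin.prod_const, Fintype.prod_sum, mul_sum, AddChar.map_sum_eq_prod]

theorem sum_norm_expSum_pow_two_mul (m : ℕ) :
    ∑ t : ZMod p, ‖expSum H t‖ ^ (2 * m) = p * T p m H := by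
  simp_rw [pow_mul', ← norm_pow, expSum_pow, norm_pow]
  rw [sum_norm_sum_stdAddChar_mul_sq (fun x : Fin m → H => ∑ i, ((x i : (ZMod p)ˣ) : ZMod p)),
    T, Nat.card_eq_fintype_card]

end expSum

theorem sum_mul_pow_three_le {ι : Type*} (s : Finset ι) {r G : ι → ℝ}
    (hr : ∀ i ∈ s, 0 ≤ r i) (hG : ∀ i ∈ s, 0 ≤ G i) :
    (∑ i ∈ s, r i * G i) ^ 3 ≤ (∑ i ∈ s, r i) * (∑ i ∈ s, r i ^ 2) * ∑ i ∈ s, G i ^ 3 := by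
  have hpq : (3 / 2 : ℝ).HolderConjugate 3 := by constructor <;> norm_num
  have holder := Real.inner_le_Lp_mul_Lq_of_nonneg s hpq hr hG
  have hA : 0 ≤ ∑ i ∈ s, r i ^ (3 / 2 : ℝ) := sum_nonneg fun i hi => by have := hr i hi; positivity
  have hB : 0 ≤ ∑ i ∈ s, G i ^ (3 : ℝ) := sum_nonneg fun i hi => by have := hG i hi; positivity
  have cs : (∑ i ∈ s, r i ^ (3 / 2 : ℝ)) ^ 2 ≤ (∑ i ∈ s, r i) * ∑ i ∈ s, r i ^ 2 := by
    have e₁ : ∑ i ∈ s, r i ^ (3 / 2 : ℝ) = ∑ i ∈ s, r i ^ (1 / 2 : ℝ) * r i :=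
      sum_congr rfl fun i hi => by rw [← Real.rpow_add_one' (hr i hi) (by norm_num)]; norm_num
    have e₂ : ∑ i ∈ s, r i = ∑ i ∈ s, (r i ^ (1 / 2 : ℝ)) ^ 2 :=
      sum_congr rfl fun i hi => by rw [← Real.rpow_mul_natCast (hr i hi)]; norm_num
    rw [e₁, e₂]
    exact sum_mul_sq_le_sq_mul_sq s _ r
  calc (∑ i ∈ s, r i * G i) ^ 3
      ≤ ((∑ i ∈ s, r i ^ (3 / 2 : ℝ)) ^ (1 / (3 / 2) : ℝ)
          * (∑ i ∈ s, G i ^ (3 : ℝ)) ^ (1 / 3 : ℝ)) ^ 3 :=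
        pow_le_pow_left₀ (sum_nonneg fun i hi => mul_nonneg (hr i hi) (hG i hi)) holder 3
    _ = (∑ i ∈ s, r i ^ (3 / 2 : ℝ)) ^ 2 * ∑ i ∈ s, G i ^ 3 := by
        rw [mul_pow, ← Real.rpow_mul_natCast hA, ← Real.rpow_mul_natCast hB]
        norm_num
    _ ≤ _ := mul_le_mul_of_nonneg_right cs (sum_nonneg fun i hi => pow_nonneg (hG i hi) 3)

theorem sum_comp_pow_three_le {α β : Type*} [Fintype β] [DecidableEq β] (s : Finset α)
    (f : α → β) {G : β → ℝ} (hG : ∀ b, 0 ≤ G b) :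
    (∑ x ∈ s, G (f x)) ^ 3 ≤ #s * #{xy ∈ s ×ˢ s | f xy.1 = f xy.2} * ∑ b, G b ^ 3 := by
  set r : β → ℝ := fun b => #{x ∈ s | f x = b}
  have fiberwise (F : β → ℝ) : ∑ x ∈ s, F (f x) = ∑ b, r b * F b := by
    rw [← sum_fiberwise s f]
    refine sum_congr rfl fun b _ => ?_
    rw [sum_congr rfl fun x hx => by rw [(mem_filter.1 hx).2], sum_const, nsmul_eq_mul]
  have hr₁ : ∑ b, r b = #s := by simpa using (fiberwise fun _ => 1).symm
  have hr₂ : ∑ b, r b ^ 2 = #{xy ∈ s ×ˢ s | f xy.1 = f xy.2} := by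
    have : (#{xy ∈ s ×ˢ s | f xy.1 = f xy.2} : ℝ) = ∑ x ∈ s, r (f x) := by
      rw [card_filter, sum_product]
      push_cast
      refine sum_congr rfl fun x _ => ?_
      simp only [r, sum_boole, eq_comm]
    simp_rw [this, fiberwise r, sq]
  rw [fiberwise G, ← hr₁, ← hr₂]
  exact sum_mul_pow_three_le univ (fun b _ => by positivity) (fun b _ => hG b)

lemma J_eq_card_filter {p : ℕ} [NeZero p] (L : ℤ) (N : ℕ) (H : Subgroup (ZMod p)ˣ)
    (a : (ZMod p)ˣ) :
    J p L N H = #{xy ∈ (Icc (L + 1) (L + N) ×ˢ (univ : Finset H))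
        ×ˢ (Icc (L + 1) (L + N) ×ˢ (univ : Finset H)) |
      (a : ZMod p) * xy.1.1 * ((xy.1.2 : (ZMod p)ˣ) : ZMod p)
        = (a : ZMod p) * xy.2.1 * ((xy.2.2 : (ZMod p)ˣ) : ZMod p)} := by
  rw [J, ← Nat.card_eq_finsetCard]
  refine Nat.card_congr ((Equiv.prodProdProdComm ℤ H ℤ H).subtypeEquiv fun xy => ?_).symm
  simp [mul_assoc, Units.mul_right_inj, and_assoc]

theorem sq_card_mul_sum_norm_expSum_pow_six_le {p : ℕ} [NeZero p] (L : ℤ) (N : ℕ)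
    (H : Subgroup (ZMod p)ˣ) (a : (ZMod p)ˣ) :
    (Nat.card H : ℝ) ^ 2 * (∑ n ∈ Icc (L + 1) (L + N), ‖expSum H (a * n)‖) ^ 6
      ≤ N ^ 4 * p * J p L N H * T p 3 H := by
  set I := Icc (L + 1) (L + N)
  set h : ℝ := (Nat.card H : ℝ)
  set S := ∑ n ∈ I, ‖expSum H (a * n)‖
  set Q := ∑ n ∈ I, ‖expSum H (a * n)‖ ^ 2
  set R := ∑ q ∈ I ×ˢ (univ : Finset H),
    ‖expSum H (a * q.1 * ((q.2 : (ZMod p)ˣ) : ZMod p))‖ ^ 2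
  have hI : (#I : ℝ) = N := by simp [I]
  have hS : S ^ 2 ≤ N * Q := hI ▸ sq_sum_le_card_mul_sum_sq
  have hQ : h * Q = R := by
    simp_rw [R, sum_product, expSum_mul_coe, sum_const, card_univ, nsmul_eq_mul, ← mul_sum, h,
      Nat.card_eq_fintype_card, Q]
  have hR : R ^ 3 ≤ (N * h) * J p L N H * (p * T p 3 H) := by
    have hölder := sum_comp_pow_three_le (I ×ˢ (univ : Finset H))
      (fun q => (a : ZMod p) * q.1 * ((q.2 : (ZMod p)ˣ) : ZMod p))
      (G := fun t => ‖expSum H t‖ ^ 2) fun _ => by positivity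
    simp_rw [← pow_mul, sum_norm_expSum_pow_two_mul, card_product] at hölder
    rwa [← J_eq_card_filter L N H a, Nat.cast_mul, hI, card_univ,
      ← Nat.card_eq_fintype_card] at hölder
  have hh : 0 < h := Nat.cast_pos.2 Nat.card_pos
  refine le_of_mul_le_mul_left ?_ hh
  calc h * (h ^ 2 * S ^ 6) = h ^ 3 * (S ^ 2) ^ 3 := by ring
    _ ≤ h ^ 3 * (N * Q) ^ 3 := by gcongr
    _ = N ^ 3 * R ^ 3 := by rw [← hQ]; ring
    _ ≤ N ^ 3 * ((N * h) * J p L N H * (p * T p 3 H)) := by gcongr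
    _ = h * (N ^ 4 * p * J p L N H * T p 3 H) := by ring

lemma sq_add_mul_add_div_add_div_eq {N h p : ℝ} (hN : N ≠ 0) (hh : 0 ≤ h) (hp : 0 < p) :
    h ^ 2 + N * h + N ^ 2 * h ^ 2 / p + N * h ^ (7 / 4 : ℝ) / p ^ (1 / 4 : ℝ)
      = N * h * (1 + h / N + N * h / p + h ^ (3 / 4 : ℝ) / p ^ (1 / 4 : ℝ)) := by
  rw [show (7 / 4 : ℝ) = 3 / 4 + 1 by norm_num, Real.rpow_add_one' hh (by norm_num)]
  have : 0 < p ^ (1 / 4 : ℝ) := by positivity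
  field_simp
  ring

lemma mul_rpow_one_div_six_pow_six {C N h p Γ e : ℝ} (hN : 0 < N) (hh : 0 < h) (hp : 0 ≤ p)
    (hΓ : 0 ≤ Γ) :
    (C * N * h * (p / (N * h ^ 3) * Γ) ^ (1 / 6 : ℝ) * e) ^ 6
      = C ^ 6 * e ^ 6 * (N ^ 5 * h ^ 3 * p * Γ) := by
  rw [mul_pow, mul_pow, mul_pow, mul_pow, ← Real.rpow_mul_natCast (by positivity)]
  norm_num
  field_simp

theorem stmt_14_general (CJ C₃ : ℝ) :
    ∀ ε > (0 : ℝ), ∃ C > (0 : ℝ),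
      ∀ (p : ℕ) [Fact p.Prime] (L : ℤ) (N : ℕ) (H : Subgroup (ZMod p)ˣ) (a : (ZMod p)ˣ),
      (Nat.card H : ℝ) < (p : ℝ) ^ ((1 : ℝ) / 2) →
      -- hypothesis on `J(𝒩, H)`
      (J p L N H : ℝ) ≤ CJ * (p : ℝ) ^ ε *
          ((Nat.card H : ℝ) ^ (2 : ℕ) + N * (Nat.card H : ℝ)
            + (N : ℝ) ^ (2 : ℕ) * (Nat.card H : ℝ) ^ (2 : ℕ) / p
            + N * (Nat.card H : ℝ) ^ ((7 : ℝ) / 4) / (p : ℝ) ^ ((1 : ℝ) / 4)) →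
      -- hypothesis on `T₃(H)`
      (T p 3 H : ℝ) ≤ C₃ * (Nat.card H : ℝ) ^ (4 : ℕ) * Real.log (Nat.card H) →
      (∑ n ∈ Finset.Icc (L + 1) (L + N),
          ‖∑ x : H,
            ep p ((a : ZMod p) * (n : ZMod p) * ((x : (ZMod p)ˣ) : ZMod p))‖)
        ≤ C * N * (Nat.card H : ℝ)
            * (((p : ℝ) / (N * (Nat.card H : ℝ) ^ (3 : ℕ)))
              * (1 + (Nat.card H : ℝ) / N + N * (Nat.card H : ℝ) / p
                  + (Nat.card H : ℝ) ^ ((3 : ℝ) / 4) / (p : ℝ) ^ ((1 : ℝ) / 4)))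
              ^ ((1 : ℝ) / 6)
            * (p : ℝ) ^ ε := by
  intro ε hε
  set K := |CJ * C₃| / (5 * ε)
  refine ⟨K + 1, by positivity, fun p _ L N H a hHp hJ hT => ?_⟩
  simp_rw [ep_eq_stdAddChar]
  change ∑ n ∈ Icc (L + 1) (L + N), ‖expSum H (a * n)‖ ≤ _
  rcases N.eq_zero_or_pos with rfl | hN
  · simp
  set h : ℝ := (Nat.card H : ℝ)
  set Γ := 1 + h / N + N * h / p + h ^ (3 / 4 : ℝ) / p ^ (1 / 4 : ℝ)
  set S := ∑ n ∈ Icc (L + 1) (L + N), ‖expSum H (a * n)‖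
  have hp : (0 : ℝ) < p := by exact_mod_cast (Fact.out : p.Prime).pos
  have hh : 0 < h := Nat.cast_pos.2 Nat.card_pos
  have hN' : (0 : ℝ) < N := by exact_mod_cast hN
  have hΓ : 0 ≤ Γ := by positivity
  rw [sq_add_mul_add_div_add_div_eq hN'.ne' hh.le hp] at hJ
  have hlog : Real.log h ≤ (p ^ ε) ^ 5 / (5 * ε) := by
    have hhp : h ≤ p := hHp.le.trans
      (Real.rpow_le_self_of_one_le (by exact_mod_cast (Fact.out : p.Prime).one_le) (by norm_num))
    rw [← Real.rpow_mul_natCast hp.le, mul_comm]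
    exact (Real.log_le_log hh hhp).trans (Real.log_le_rpow_div hp.le (by positivity))
  refine le_of_pow_le_pow_left₀ (n := 6) (by norm_num) (by positivity) ?_
  have hK : K ≤ (K + 1) ^ 6 := (le_add_of_nonneg_right zero_le_one).trans
    (le_self_pow₀ (by linarith [show 0 ≤ K by positivity]) (by norm_num))
  refine le_of_mul_le_mul_left ?_ (pow_pos hh 2)
  calc h ^ 2 * S ^ 6 ≤ N ^ 4 * p * J p L N H * T p 3 H :=
        sq_card_mul_sum_norm_expSum_pow_six_le L N H a
    _ ≤ N ^ 4 * p * (CJ * p ^ ε * (N * h * Γ)) * (C₃ * h ^ 4 * Real.log h) := by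
        gcongr
        exact mul_nonneg (by positivity) ((Nat.cast_nonneg _).trans hJ)
    _ = h ^ 2 * (CJ * C₃ * Real.log h * p ^ ε * (N ^ 5 * h ^ 3 * p * Γ)) := by ring
    _ ≤ h ^ 2 * (|CJ * C₃| * ((p ^ ε) ^ 5 / (5 * ε)) * p ^ ε * (N ^ 5 * h ^ 3 * p * Γ)) := by
        gcongr
        exact le_abs_self _
    _ = h ^ 2 * (K * (p ^ ε) ^ 6 * (N ^ 5 * h ^ 3 * p * Γ)) := by ring
    _ ≤ h ^ 2 * ((K + 1) ^ 6 * (p ^ ε) ^ 6 * (N ^ 5 * h ^ 3 * p * Γ)) := by gcongr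
    _ = _ := by rw [mul_rpow_one_div_six_pow_six hN' hh hp.le hΓ]

theorem stmt_14 (CJ C₃ : ℝ) (hCJ : 0 < CJ) (hC₃ : 0 < C₃) :
    ∀ ε > (0 : ℝ), ∃ C > (0 : ℝ),
      ∀ (p : ℕ) [Fact p.Prime] (L : ℤ) (N : ℕ) (H : Subgroup (ZMod p)ˣ) (a : (ZMod p)ˣ),
      (Nat.card H : ℝ) < (p : ℝ) ^ ((1 : ℝ) / 2) →
      -- hypothesis on `J(𝒩, H)`
      (J p L N H : ℝ) ≤ CJ * (p : ℝ) ^ ε *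
          ((Nat.card H : ℝ) ^ (2 : ℕ) + N * (Nat.card H : ℝ)
            + (N : ℝ) ^ (2 : ℕ) * (Nat.card H : ℝ) ^ (2 : ℕ) / p
            + N * (Nat.card H : ℝ) ^ ((7 : ℝ) / 4) / (p : ℝ) ^ ((1 : ℝ) / 4)) →
      -- hypothesis on `T₃(H)`
      (T p 3 H : ℝ) ≤ C₃ * (Nat.card H : ℝ) ^ (4 : ℕ) * Real.log (Nat.card H) →
      (∑ n ∈ Finset.Icc (L + 1) (L + N),
          ‖∑ x : H,
            ep p ((a : ZMod p) * (n : ZMod p) * ((x : (ZMod p)ˣ) : ZMod p))‖)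
        ≤ C * N * (Nat.card H : ℝ)
            * (((p : ℝ) / (N * (Nat.card H : ℝ) ^ (3 : ℕ)))
              * (1 + (Nat.card H : ℝ) / N + N * (Nat.card H : ℝ) / p
                  + (Nat.card H : ℝ) ^ ((3 : ℝ) / 4) / (p : ℝ) ^ ((1 : ℝ) / 4)))
              ^ ((1 : ℝ) / 6)
            * (p : ℝ) ^ ε :=
  stmt_14_general CJ C₃
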